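/- For any word x of length n over {0,…,q−1}, any deletion set D ⊆ {1,…,n} with |D| = c, the index I(x^{(D)}) = M(x) − M(x^{(D)}) is nonnegative, and if c ≤ d then I(x^{(D)}) ≤ p·(w_{n−c+1} + w_{n−c+2} + ⋯ + w_n) < w_{n+1}. -/

import Mathlib

/-- Weight sequence: `W p d i` = w_i(q,d) where p = q-1; w_i = 0 for i ≤ 0 (encoded by
ℕ truncated subtraction together with `W p d 0 = 0`), and w_i = 1 + p·∑_{j=1}^d w_{i-j}
for i ≥ 1. -/
def W (p d : ℕ) : ℕ → ℕ
  | 0 => 0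
  | (i+1) => 1 + p * ∑ j ∈ Finset.range d, W p d (i - j)
decreasing_by exact Nat.lt_succ_of_le (Nat.sub_le i j)

/-- Moment of a word (1-indexed): M(x) = ∑_{i=1}^{n} w_i x_i. -/
def moment (w : ℕ → ℕ) (x : List ℕ) : ℕ :=
  ∑ i ∈ Finset.range x.length, w (i + 1) * x.getD i 0

/-- Deleted word x^{(D)}: delete the symbols at the (1-indexed) positions in D,
keeping the remaining symbols in order. -/
def deleteD (x : List ℕ) (D : Finset ℕ) : List ℕ :=
  ((List.range x.length).filter (fun i => (i + 1) ∉ D)).map (fun i => x.getD i 0)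

/-!
Deleting symbols moves every surviving symbol to a position of no larger weight, so the
moment can only drop. Dropping a symbol `a ≤ p` in front of a word `y` costs at most `p·w₁` for
`a` itself, and shifting `y` one place down loses at most `p` times the telescoping increments
`w_{i+1} - w_i`, i.e. `p·(w_{|y|+1} - w₁)`. Along a sublist `y` of `x` this adds up to
`M(x) - M(y) ≤ p·∑_{i=|y|+1}^{|x|} w_i`, and for at most `d` deletions that sum is part of the
recursion defining `w_{n+1}`.
-/

open Finset

lemma sum_Icc_comp_add_one {M : Type*} [AddCommMonoid M] (f : ℕ → M) (a b : ℕ) :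
    ∑ i ∈ Icc a b, f (i + 1) = ∑ i ∈ Icc (a + 1) (b + 1), f i := by
  rw [← map_add_right_Icc, sum_map]
  rfl

lemma sum_Icc_sub_add_one_eq_sum_range {M : Type*} [AddCommMonoid M] (f : ℕ → M) {c n : ℕ}
    (hcn : c ≤ n) : ∑ i ∈ Icc (n - c + 1) n, f i = ∑ j ∈ range c, f (n - j) := by
  rw [← Nat.Ico_zero_eq_range, sum_Ico_reflect f 0 (by omega), ← Ico_add_one_right_eq_Icc,
    Nat.sub_zero, Nat.sub_add_comm hcn]

section Moment

variable {w : ℕ → ℕ} {p : ℕ} {x y : List ℕ}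

lemma Monotone.comp_add_one (hw : Monotone w) : Monotone fun i => w (i + 1) :=
  hw.comp fun _ _ h => Nat.add_le_add_right h 1

lemma moment_cons (w : ℕ → ℕ) (a : ℕ) (x : List ℕ) :
    moment w (a :: x) = w 1 * a + moment (fun i => w (i + 1)) x := by
  simp [moment, sum_range_succ', add_comm]

lemma moment_mono_weight {w' : ℕ → ℕ} (h : ∀ i, w i ≤ w' i) (x : List ℕ) :
    moment w x ≤ moment w' x :=
  sum_le_sum fun i _ => Nat.mul_le_mul_right _ (h (i + 1))

lemma moment_le_of_sublist (hw : Monotone w) (h : y.Sublist x) : moment w y ≤ moment w x := by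
  induction h generalizing w with
  | slnil => rfl
  | @cons y x a _ ih =>
    calc moment w y ≤ moment (fun i => w (i + 1)) y :=
          moment_mono_weight (fun i => hw i.le_succ) y
      _ ≤ moment (fun i => w (i + 1)) x := ih hw.comp_add_one
      _ ≤ moment w (a :: x) := by rw [moment_cons]; exact Nat.le_add_left _ _
  | cons_cons a _ ih =>
    rw [moment_cons, moment_cons]
    exact Nat.add_le_add_left (ih hw.comp_add_one) _

lemma moment_shift_add_le (hw : Monotone w) (hy : ∀ b ∈ y, b ≤ p) :
    moment (fun i => w (i + 1)) y + p * w 1 ≤ moment w y + p * w (y.length + 1) := by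
  induction y generalizing w with
  | nil => simp [moment]
  | cons b y ih =>
    have hb : b ≤ p := hy b List.mem_cons_self
    have ih' := ih hw.comp_add_one fun c hc => hy c (List.mem_cons_of_mem b hc)
    have key : w (1 + 1) * b + p * w 1 ≤ w 1 * b + p * w (1 + 1) := by
      obtain ⟨t, ht⟩ := Nat.exists_eq_add_of_le (hw (Nat.le_succ 1))
      rw [ht]
      nlinarith [Nat.mul_le_mul_left t hb]
    rw [moment_cons, moment_cons, List.length_cons]
    omega

lemma moment_le_add_of_sublist (hw : Monotone w) (hx : ∀ a ∈ x, a ≤ p) (h : y.Sublist x) :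
    moment w x ≤ moment w y + p * ∑ i ∈ Icc (y.length + 1) x.length, w i := by
  induction h generalizing w with
  | slnil => simp [moment]
  | @cons y x a h ih =>
    have ih' := ih hw.comp_add_one fun b hb => hx b (List.mem_cons_of_mem a hb)
    have hshift := moment_shift_add_le hw fun b hb => hx b (List.mem_cons_of_mem a (h.subset hb))
    have ha : w 1 * a ≤ p * w 1 := by
      rw [Nat.mul_comm]; exact Nat.mul_le_mul_right _ (hx a List.mem_cons_self)
    have hsplit : ∑ i ∈ Icc (y.length + 1) (x.length + 1), w i =
        w (y.length + 1) + ∑ i ∈ Icc (y.length + 1 + 1) (x.length + 1), w i := by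
      rw [← insert_Icc_add_one_left_eq_Icc (by have := h.length_le; omega), sum_insert (by simp)]
    rw [moment_cons, List.length_cons, hsplit, Nat.mul_add, ← sum_Icc_comp_add_one]
    omega
  | cons_cons a h ih =>
    have ih' := ih hw.comp_add_one fun b hb => hx b (List.mem_cons_of_mem a hb)
    rw [moment_cons, moment_cons, List.length_cons, List.length_cons, ← sum_Icc_comp_add_one]
    omega

end Moment

section Weights

variable (p d : ℕ)

lemma W_zero : W p d 0 = 0 := by rw [W]

lemma W_succ (i : ℕ) : W p d (i + 1) = 1 + p * ∑ j ∈ range d, W p d (i - j) := by rw [W]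

lemma W_le_W_succ (i : ℕ) : W p d i ≤ W p d (i + 1) := by
  induction i using Nat.strong_induction_on with
  | _ i ih =>
    rcases i with _ | i
    · simp [W_zero]
    · rw [W_succ, W_succ]
      gcongr with j
      rcases le_or_gt j i with hji | hij
      · rw [Nat.sub_add_comm hji]
        exact ih (i - j) (by omega)
      · rw [Nat.sub_eq_zero_of_le hij.le, Nat.sub_eq_zero_of_le hij]

lemma W_monotone : Monotone (W p d) := monotone_nat_of_le_succ (W_le_W_succ p d)

lemma mul_sum_Icc_W_lt_W_succ {n c : ℕ} (hcn : c ≤ n) (hcd : c ≤ d) :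
    p * ∑ i ∈ Icc (n - c + 1) n, W p d i < W p d (n + 1) := by
  rw [sum_Icc_sub_add_one_eq_sum_range _ hcn, W_succ]
  have hsum := sum_le_sum_of_subset (f := fun j => W p d (n - j)) (range_subset_range.mpr hcd)
  have := Nat.mul_le_mul_left p hsum
  omega

end Weights

lemma deleteD_sublist (x : List ℕ) (D : Finset ℕ) : (deleteD x D).Sublist x := by
  have hx : (List.range x.length).map (fun i => x.getD i 0) = x := by
    apply List.ext_getElem <;> simp +contextual
  conv_rhs => rw [← hx]
  exact List.filter_sublist.map _

lemma length_deleteD {x : List ℕ} {D : Finset ℕ} (hD : D ⊆ Icc 1 x.length) :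
    (deleteD x D).length = x.length - D.card := by
  have hcard : #{i ∈ range x.length | i + 1 ∈ D} = #D := by
    refine card_nbij' (· + 1) (· - 1) (fun i hi => (mem_filter.mp hi).2) (fun i hi => ?_)
      (fun i _ => Nat.add_sub_cancel i 1) (fun i hi => ?_) <;>
    obtain ⟨h1, h2⟩ := mem_Icc.mp (hD hi)
    · simp only [coe_filter, Set.mem_ofPred_eq, mem_range, Nat.sub_add_cancel h1]
      exact ⟨by omega, hi⟩
    · exact Nat.sub_add_cancel h1
  have hsplit := card_filter_add_card_filter_not (s := range x.length) (fun i => i + 1 ∈ D)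
  have hlength : (deleteD x D).length = #{i ∈ range x.length | i + 1 ∉ D} := by
    rw [deleteD, List.length_map]
    rfl
  rw [card_range] at hsplit
  omega

theorem index_bounds_general (q d n c : ℕ)
    (x : List ℕ) (hlen : x.length = n) (hx : ∀ a ∈ x, a < q)
    (D : Finset ℕ) (hD : D ⊆ Finset.Icc 1 n) (hcard : D.card = c) :
    0 ≤ (moment (W (q - 1) d) x : ℤ) - (moment (W (q - 1) d) (deleteD x D) : ℤ) ∧
    (c ≤ d →
      (moment (W (q - 1) d) x : ℤ) - (moment (W (q - 1) d) (deleteD x D) : ℤ) ≤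
        (q - 1 : ℕ) * ∑ i ∈ Finset.Icc (n - c + 1) n, (W (q - 1) d i : ℤ) ∧
      ((q - 1 : ℕ) * ∑ i ∈ Finset.Icc (n - c + 1) n, (W (q - 1) d i : ℤ)) <
        (W (q - 1) d (n + 1) : ℤ)) := by
  have hmono := W_monotone (q - 1) d
  have hsub := deleteD_sublist x D
  have hcn : c ≤ n := by simpa [hcard] using card_le_card hD
  have hdel : (deleteD x D).length = n - c := by
    rw [length_deleteD (hlen ▸ hD), hlen, hcard]
  have hupper := moment_le_add_of_sublist hmono (fun a ha => Nat.le_sub_one_of_lt (hx a ha)) hsub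
  rw [hdel, hlen] at hupper
  refine ⟨sub_nonneg.mpr (mod_cast moment_le_of_sublist hmono hsub), fun hcd => ⟨?_, ?_⟩⟩
  · rw [sub_le_iff_le_add']
    exact_mod_cast hupper
  · exact_mod_cast mul_sum_Icc_W_lt_W_succ (q - 1) d hcn hcd

theorem index_bounds (q d n c : ℕ) (hq : 2 ≤ q) (hd : 1 ≤ d)
    (x : List ℕ) (hlen : x.length = n) (hx : ∀ a ∈ x, a < q)
    (D : Finset ℕ) (hD : D ⊆ Finset.Icc 1 n) (hcard : D.card = c) :
    0 ≤ (moment (W (q - 1) d) x : ℤ) - (moment (W (q - 1) d) (deleteD x D) : ℤ) ∧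
    (c ≤ d →
      (moment (W (q - 1) d) x : ℤ) - (moment (W (q - 1) d) (deleteD x D) : ℤ) ≤
        (q - 1 : ℕ) * ∑ i ∈ Finset.Icc (n - c + 1) n, (W (q - 1) d i : ℤ) ∧
      ((q - 1 : ℕ) * ∑ i ∈ Finset.Icc (n - c + 1) n, (W (q - 1) d i : ℤ)) <
        (W (q - 1) d (n + 1) : ℤ)) :=
  index_bounds_general q d n c x hlen hx D hD hcard
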